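/- arXiv:math/0506625 — 3 statements merged into one kernel-verified Lean document; each statement's English description precedes it below -/
import Mathlib

section
/- Let G be a commutative Lie group (e.g. a compact torus) with an automorphism σ that is 1-semisimple, i.e., on the Lie algebra 𝔤 one has ker(1−dσ) ⊕ im(1−dσ) = 𝔤. Let T be the identity component of the fixed-point subgroup G^σ. Then for every z ∈ G there exists g ∈ G with g⁻¹·z·σ(g) ∈ T. Equivalently, the canonical map H¹(ℤ,T) → H¹(ℤ,G) is surjective. -/
/-!
Split `v = a + (w - L w)` with `L a = a` using `V = ker (1 - L) ⊕ range (1 - L)`. Then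
`g = [w]` conjugates `[v]` to `[a]`, and `[a]` lies in the image of the fixed subspace
`ker (1 - L)`: a connected set of `σ`-fixed points containing `0`.
-/

namespace Module.End

variable {R M : Type*} [Ring R] [AddCommGroup M] [Module R M]

lemma mem_ker_one_sub_iff {f : Module.End R M} {x : M} :
    x ∈ LinearMap.ker (1 - f) ↔ f x = x := by
  rw [LinearMap.mem_ker, LinearMap.sub_apply, one_apply, sub_eq_zero, eq_comm]

lemma exists_eq_add_sub_apply_of_codisjoint {f : Module.End R M}
    (h : Codisjoint (LinearMap.ker (1 - f)) (LinearMap.range (1 - f))) (v : M) :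
    ∃ a w : M, f a = a ∧ v = a + (w - f w) := by
  obtain ⟨a, b, ha, ⟨w, rfl⟩, rfl⟩ := Submodule.codisjoint_iff_exists_add_eq.mp h v
  exact ⟨a, w, mem_ker_one_sub_iff.mp ha, rfl⟩

end Module.End

namespace QuotientAddGroup

lemma neg_add_mk_add_apply_mk {G : Type*} [AddCommGroup G] {N : AddSubgroup G}
    {f : G → G} {σ : G ⧸ N →+ G ⧸ N} (hσ : ∀ x : G, σ x = f x) (a w : G) :
    -(w : G ⧸ N) + ↑(a + (w - f w)) + σ w = a := by
  rw [hσ, ← mk_neg, ← mk_add, ← mk_add]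
  congr 1
  abel

variable {V : Type*} [AddCommGroup V] [Module ℝ V] [TopologicalSpace V]
  [IsTopologicalAddGroup V] [ContinuousSMul ℝ V]

lemma mk_mem_connectedComponentIn_fixedPoints {Λ : AddSubgroup V} {L : V →ₗ[ℝ] V}
    {σ : V ⧸ Λ →+ V ⧸ Λ} (hσ : ∀ x : V, σ x = L x) {a : V} (ha : L a = a) :
    (a : V ⧸ Λ) ∈ connectedComponentIn {x | σ x = x} 0 := by
  let S : Submodule ℝ V := LinearMap.ker (1 - L)
  have hS : IsPreconnected ((↑) '' (S : Set V) : Set (V ⧸ Λ)) :=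
    S.convex.isPreconnected.image _ continuous_quotient_mk'.continuousOn
  have hfixed : ((↑) '' (S : Set V) : Set (V ⧸ Λ)) ⊆ {x | σ x = x} := by
    rintro _ ⟨b, hb, rfl⟩
    rw [Set.mem_ofPred_eq, hσ, Module.End.mem_ker_one_sub_iff.mp hb]
  exact hS.subset_connectedComponentIn ⟨0, S.zero_mem, mk_zero Λ⟩ hfixed
    ⟨a, Module.End.mem_ker_one_sub_iff.mpr ha, rfl⟩

end QuotientAddGroup

theorem stmt7_general {V : Type*} [NormedAddCommGroup V] [NormedSpace ℝ V]
    (Λ : AddSubgroup V)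
    (L : V ≃ₗ[ℝ] V) (hΛ : ∀ x ∈ Λ, L x ∈ Λ)
    (σ : (V ⧸ Λ) →+ V ⧸ Λ)
    (hσ : σ = QuotientAddGroup.map Λ Λ L.toLinearMap.toAddMonoidHom hΛ)
    (T : Set (V ⧸ Λ)) (hT : T = connectedComponentIn {x : V ⧸ Λ | σ x = x} 0)
    (hss : IsCompl (LinearMap.ker (1 - (L : V →ₗ[ℝ] V)))
      (LinearMap.range (1 - (L : V →ₗ[ℝ] V)))) :
    ∀ z : V ⧸ Λ, ∃ g : V ⧸ Λ, -g + z + σ g ∈ T := by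
  have hσL : ∀ x : V, σ x = (L : V →ₗ[ℝ] V) x := fun x ↦ by subst hσ; rfl
  subst hT
  intro z
  obtain ⟨v, rfl⟩ := QuotientAddGroup.mk_surjective z
  obtain ⟨a, w, ha, rfl⟩ := Module.End.exists_eq_add_sub_apply_of_codisjoint hss.codisjoint v
  refine ⟨w, ?_⟩
  rw [QuotientAddGroup.neg_add_mk_add_apply_mk hσL]
  exact QuotientAddGroup.mk_mem_connectedComponentIn_fixedPoints hσL ha

/-- A compact torus is modelled as `V ⧸ Λ` for a full lattice `Λ` in a
finite-dimensional real vector space `V`; an automorphism `σ` is induced by a linear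
automorphism `L` of `V` preserving `Λ`, and `dσ = L`.  If `σ` is `1`-semisimple, i.e.
`𝔤 = ker(1−dσ) ⊕ im(1−dσ)`, then with `T` the identity component of the fixed subgroup
`G^σ`, every `z ∈ G` satisfies `g⁻¹·z·σ(g) ∈ T` for some `g`; equivalently the
canonical map `H¹(ℤ,T) → H¹(ℤ,G)` is surjective. -/
theorem stmt7 {V : Type*} [NormedAddCommGroup V] [NormedSpace ℝ V]
    [FiniteDimensional ℝ V]
    (Λ : AddSubgroup V) [DiscreteTopology Λ] [CompactSpace (V ⧸ Λ)]
    (L : V ≃ₗ[ℝ] V) (hΛ : ∀ x ∈ Λ, L x ∈ Λ)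
    (σ : (V ⧸ Λ) →+ V ⧸ Λ)
    (hσ : σ = QuotientAddGroup.map Λ Λ L.toLinearMap.toAddMonoidHom hΛ)
    (T : Set (V ⧸ Λ)) (hT : T = connectedComponentIn {x : V ⧸ Λ | σ x = x} 0)
    (hss : IsCompl (LinearMap.ker (1 - (L : V →ₗ[ℝ] V)))
      (LinearMap.range (1 - (L : V →ₗ[ℝ] V)))) :
    ∀ z : V ⧸ Λ, ∃ g : V ⧸ Λ, -g + z + σ g ∈ T :=
  stmt7_general Λ L hΛ σ hσ T hT hss
end

section
/- Let G be a compact torus with automorphism σ, T = (G^σ)₀, and suppose there is a discrete σ-invariant subgroup Γ of G such that every element z ∈ G can be written z = g⁻¹·t·γ·σ(g) with g ∈ G, t ∈ T, γ ∈ Γ. Then σ is 1-semisimple, i.e., ker(1−dσ) = ker((1−dσ)²) on the Lie algebra of G. -/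
/-- Compact torus `G = V ⧸ Λ` with automorphism `σ` induced by `L` (so `dσ = L`),
`T = (G^σ)₀`.  If there is a discrete `σ`-invariant subgroup `Γ` such that every
element of `G` lies in the twisted orbit of some element of `T·Γ` (i.e. every `z` can
be written `z = g⁻¹·t·γ·σ(g)`), then `σ` is `1`-semisimple:
`ker(1−dσ) = ker((1−dσ)²)`. -/
theorem stmt8 {V : Type*} [NormedAddCommGroup V] [NormedSpace ℝ V]
    [FiniteDimensional ℝ V]
    (Λ : AddSubgroup V) [DiscreteTopology Λ] [CompactSpace (V ⧸ Λ)]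
    (L : V ≃ₗ[ℝ] V) (hΛ : ∀ x ∈ Λ, L x ∈ Λ)
    (σ : (V ⧸ Λ) →+ V ⧸ Λ)
    (hσ : σ = QuotientAddGroup.map Λ Λ L.toLinearMap.toAddMonoidHom hΛ)
    (T : Set (V ⧸ Λ)) (hT : T = connectedComponentIn {x : V ⧸ Λ | σ x = x} 0)
    (Γ : AddSubgroup (V ⧸ Λ)) [DiscreteTopology Γ] (hΓ : ∀ γ ∈ Γ, σ γ ∈ Γ)
    (hyp : ∀ z : V ⧸ Λ, ∃ g t γ, t ∈ T ∧ γ ∈ Γ ∧ z = -g + t + γ + σ g) :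
    LinearMap.ker (1 - (L : V →ₗ[ℝ] V)) =
      LinearMap.ker ((1 - (L : V →ₗ[ℝ] V)) ^ 2) := by
  classical
  set A : V →ₗ[ℝ] V := 1 - (L : V →ₗ[ℝ] V) with hA
  have hσmk : ∀ x : V, σ (x : V ⧸ Λ) = ((L x : V) : V ⧸ Λ) := by
    intro x
    rw [hσ]
    rfl
  -- key step: ker A ⊔ range A = ⊤
  have hW : LinearMap.ker A ⊔ LinearMap.range A = ⊤ := by
    by_contra hne
    set W : Submodule ℝ V := LinearMap.ker A ⊔ LinearMap.range A with hWdef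
    have hCΛ : Countable Λ := TopologicalSpace.separableSpace_iff_countable.mp inferInstance
    have hCΓ : Countable Γ := TopologicalSpace.separableSpace_iff_countable.mp inferInstance
    -- choose lifts of elements of Γ
    have hsurj : Function.Surjective (QuotientAddGroup.mk : V → V ⧸ Λ) :=
      QuotientAddGroup.mk_surjective
    have c : Γ → V := fun γ => (hsurj (γ : V ⧸ Λ)).choose
    have hc : ∀ γ : Γ, ((fun γ : Γ => (hsurj (γ : V ⧸ Λ)).choose) γ : V ⧸ Λ) = (γ : V ⧸ Λ) :=
      fun γ => (hsurj (γ : V ⧸ Λ)).choose_spec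
    -- choose preimages under A when they exist
    let s : Λ → V := fun l => if h : ∃ y, A y = (l : V) then h.choose else 0
    have hs : ∀ l : Λ, (∃ y, A y = (l : V)) → A (s l) = (l : V) := by
      intro l h
      simp only [s, dif_pos h]
      exact h.choose_spec
    -- the countable family of closed sets
    let c' : Γ → V := fun γ => (hsurj (γ : V ⧸ Λ)).choose
    let F : Γ × Λ × Λ → Set V := fun i =>
      {x : V | x - (s i.2.1 + c' i.1 + (i.2.2 : V)) ∈ (W : Set V)}
    have hFclosed : ∀ i, IsClosed (F i) := by
      intro i
      exact IsClosed.preimage (by continuity) W.closed_of_finiteDimensional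
    have hFcover : ⋃ i, F i = Set.univ := by
      apply Set.eq_univ_of_forall
      intro x
      obtain ⟨g, t, γ, ht, hγ, heq⟩ := hyp (x : V ⧸ Λ)
      obtain ⟨gv, rfl⟩ := hsurj g
      obtain ⟨tv, rfl⟩ := hsurj t
      -- t is fixed by σ
      have htfix : σ (tv : V ⧸ Λ) = (tv : V ⧸ Λ) := by
        have := connectedComponentIn_subset {x : V ⧸ Λ | σ x = x} (0 : V ⧸ Λ)
        rw [hT] at ht
        exact this ht
      have hAtv : A tv ∈ Λ := by
        rw [hσmk] at htfix
        have : ((L tv - tv : V) : V ⧸ Λ) = 0 := by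
          rw [QuotientAddGroup.mk_sub, htfix, sub_self]
        have hmem : L tv - tv ∈ Λ := (QuotientAddGroup.eq_zero_iff _).mp this
        have : -(L tv - tv) ∈ Λ := Λ.neg_mem hmem
        simpa [hA, sub_eq_add_neg, neg_add, add_comm] using this
      set lt : Λ := ⟨A tv, hAtv⟩ with hlt
      -- lift of γ
      have hγ' : ((c' ⟨γ, hγ⟩ : V) : V ⧸ Λ) = γ := (hsurj γ).choose_spec
      -- unravel heq
      have heq2 : (x : V ⧸ Λ) = ((-gv + tv + c' ⟨γ, hγ⟩ + L gv : V) : V ⧸ Λ) := by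
        rw [heq, hσmk]
        simp only [QuotientAddGroup.mk_add, QuotientAddGroup.mk_neg, hγ']
      have hmem : x - (-gv + tv + c' ⟨γ, hγ⟩ + L gv) ∈ Λ := by
        have : ((x - (-gv + tv + c' ⟨γ, hγ⟩ + L gv) : V) : V ⧸ Λ) = 0 := by
          rw [QuotientAddGroup.mk_sub, ← heq2, sub_self]
        exact (QuotientAddGroup.eq_zero_iff _).mp this
      set lx : Λ := ⟨x - (-gv + tv + c' ⟨γ, hγ⟩ + L gv), hmem⟩ with hlx
      refine Set.mem_iUnion.mpr ⟨⟨⟨γ, hγ⟩, lt, lx⟩, ?_⟩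
      show x - (s lt + c' ⟨γ, hγ⟩ + (lx : V)) ∈ (W : Set V)
      have hslt : A (s lt) = A tv := hs lt ⟨tv, rfl⟩
      have h1 : tv - s lt ∈ LinearMap.ker A := by
        rw [LinearMap.mem_ker, map_sub, hslt, sub_self]
      have h2 : L gv - gv ∈ LinearMap.range A := by
        refine ⟨-gv, ?_⟩
        simp [hA, sub_eq_add_neg, add_comm]
      have hx : x - (s lt + c' ⟨γ, hγ⟩ + (lx : V)) = (tv - s lt) + (L gv - gv) := by
        simp only [hlx]
        abel
      rw [hx]
      exact W.add_mem (Submodule.mem_sup_left h1) (Submodule.mem_sup_right h2)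
    -- Baire
    obtain ⟨i, hi⟩ := nonempty_interior_of_iUnion_of_closed hFclosed hFcover
    obtain ⟨x, hx⟩ := hi
    -- transfer nonempty interior to W
    have : (interior (W : Set V)).Nonempty := by
      have hhom : F i = (Homeomorph.subRight (s i.2.1 + c' i.1 + (i.2.2 : V))) ⁻¹' (W : Set V) := rfl
      rw [hhom, ← Homeomorph.preimage_interior] at hx
      exact ⟨_, hx⟩
    exact hne (W.eq_top_of_nonempty_interior' this)
  -- conclude: ker A ⊓ range A = ⊥
  have hinf : LinearMap.ker A ⊓ LinearMap.range A = ⊥ := by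
    have h1 := Submodule.finrank_sup_add_finrank_inf_eq (LinearMap.ker A) (LinearMap.range A)
    rw [hW] at h1
    have h2 := LinearMap.finrank_range_add_finrank_ker A
    have h3 : Module.finrank ℝ (LinearMap.ker A ⊓ LinearMap.range A : Submodule ℝ V) = 0 := by
      have := finrank_top ℝ V
      omega
    exact Submodule.finrank_eq_zero.mp h3
  ext v
  simp only [LinearMap.mem_ker, pow_two, Module.End.mul_apply]
  constructor
  · intro h; rw [h, map_zero]
  · intro h
    have hmem : A v ∈ LinearMap.ker A ⊓ LinearMap.range A :=
      ⟨LinearMap.mem_ker.mpr h, ⟨v, rfl⟩⟩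
    rw [hinf] at hmem
    exact hmem
end

section
/- Let G be a connected compact Lie group, σ an automorphism of G, T a torus contained in the fixed-point group G^σ, and t ∈ T. Suppose Ad(t⁻¹) ∘ dσ is a semisimple endomorphism of the Lie algebra 𝔤 (which holds when G is semisimple). Then im(Ad(t⁻¹) − dσ) ∩ 𝔱 = 0, where 𝔱 is the Lie algebra of T. Consequently, the twisted orbit through t meets T in a discrete set near t. -/
namespace Module.End

variable {R M : Type*} [CommRing R] [AddCommGroup M] [Module R M] {f : End R M}

lemma ker_mem_invtSubmodule (f : End R M) : LinearMap.ker f ∈ f.invtSubmodule :=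
  (mem_invtSubmodule f).mpr (LinearMap.ker_le_comap f)

/-- The range of `f` lies in any invariant complement of its kernel. -/
lemma IsSemisimple.disjoint_range_ker (hf : f.IsSemisimple) :
    Disjoint (LinearMap.range f) (LinearMap.ker f) := by
  obtain ⟨q, hq, hcompl⟩ := isSemisimple_iff.mp hf _ f.ker_mem_invtSubmodule
  have hrange : LinearMap.range f ≤ q := by
    rw [LinearMap.range_le_iff_comap, eq_top_iff, ← hcompl.sup_eq_top]
    exact sup_le (LinearMap.ker_le_comap f) ((mem_invtSubmodule f).mp hq)
  exact hcompl.disjoint.symm.mono_left hrange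

end Module.End

theorem stmt19_general {𝔤 : Type*} [AddCommGroup 𝔤] [Module ℝ 𝔤]
    (Adt dσ : Module.End ℝ 𝔤)
    (𝔱 : Submodule ℝ 𝔤) (h𝔱 : 𝔱 ≤ LinearMap.ker (Adt - dσ))
    (hss : (Adt - dσ).IsSemisimple) :
    LinearMap.range (Adt - dσ) ⊓ 𝔱 = ⊥ :=
  disjoint_iff.mp (hss.disjoint_range_ker.mono_right h𝔱)

/-- Linear-algebra core of the statement: on the Lie algebra `𝔤` of a connected compact
Lie group, with `Adt = Ad(t⁻¹)` and `dσ` commuting endomorphisms, `𝔱 ⊆ ker(Adt − dσ)`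
the Lie algebra of a torus `T ⊆ G^σ` containing `t`, if `Adt − dσ` is semisimple then
`im(Adt − dσ) ∩ 𝔱 = 0` (so the twisted orbit through `t` meets `T` discretely near `t`). -/
theorem stmt19 {𝔤 : Type*} [AddCommGroup 𝔤] [Module ℝ 𝔤] [FiniteDimensional ℝ 𝔤]
    (Adt dσ : Module.End ℝ 𝔤) (hcomm : Commute Adt dσ)
    (𝔱 : Submodule ℝ 𝔤) (h𝔱 : 𝔱 ≤ LinearMap.ker (Adt - dσ))
    (hss : (Adt - dσ).IsSemisimple) :
    LinearMap.range (Adt - dσ) ⊓ 𝔱 = ⊥ :=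
  stmt19_general Adt dσ 𝔱 h𝔱 hss
end
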